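/- Let K be a weak concurrent Kleene algebra in which the concurrency operator additionally distributes over choice, i.e. u∥(v+w) = u∥v + u∥w for all u, v, w. Let x, y ∈ K satisfy: (x·a)∥(y·b) = (x∥y)·(a∥b) for all a, b ∈ K; (x·a)∥1 = 0 for all a ∈ K; and 1∥(y·b) = 0 for all b ∈ K. Assume moreover the continuity facts that hold in the concrete automaton model: (x∥y)* is the least upper bound (with respect to the order x ≤ y iff x+y = y) of the set {(1 + x∥y)^n : n ∈ ℕ}, and x*∥y* is the least upper bound of the set {(1+x)^m ∥ (1+y)^n : m, n ∈ ℕ}, where powers are defined by z^0 = 1 and z^(n+1) = z·z^n. Then x*∥y* = (x∥y)*. -/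
import Mathlib


/-- Operations of a weak concurrent Kleene algebra. -/
class WCKAOps (K : Type*) where
  add : K → K → K
  seq : K → K → K
  par : K → K → K
  star : K → K
  zero : K
  one : K

namespace WCKAOps

variable {K : Type*} [WCKAOps K]

/-- The natural order: `x ≤ y` iff `x + y = y`. -/
def kle (x y : K) : Prop := add x y = y

end WCKAOps

open WCKAOps

/-- Axioms of a weak concurrent Kleene algebra. -/
class WCKA (K : Type*) [WCKAOps K] : Prop where
  add_assoc : ∀ x y z : K, add (add x y) z = add x (add y z)
  add_comm : ∀ x y : K, add x y = add y x
  add_idem : ∀ x : K, add x x = x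
  add_zero : ∀ x : K, add x zero = x
  seq_assoc : ∀ x y z : K, seq (seq x y) z = seq x (seq y z)
  one_seq : ∀ x : K, seq one x = x
  seq_one : ∀ x : K, seq x one = x
  zero_seq : ∀ x : K, seq zero x = zero
  add_seq : ∀ x y z : K, seq (add x y) z = add (seq x z) (seq y z)
  seq_subdistrib : ∀ x y z : K, kle (add (seq x y) (seq x z)) (seq x (add y z))
  star_unfold : ∀ x : K, add one (seq x (star x)) = star x
  star_induction : ∀ x y : K, kle (seq x y) y → kle (seq (star x) y) y
  par_assoc : ∀ x y z : K, par (par x y) z = par x (par y z)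
  par_comm : ∀ x y : K, par x y = par y x
  par_one_one : par (one : K) one = one
  par_subdistrib : ∀ x y z : K, kle (add (par x y) (par x z)) (par x (add y z))
  interchange : ∀ x y u v : K, kle (seq (par x y) (par u v)) (par (seq x u) (seq y v))

/-- Powers: `z^0 = 1`, `z^(n+1) = z·z^n`. -/
def wpow {K : Type*} [WCKAOps K] (z : K) : ℕ → K
  | 0 => WCKAOps.one
  | n + 1 => WCKAOps.seq z (wpow z n)

namespace WCKAHelpers

variable {K : Type*} [WCKAOps K] [WCKA K]

lemma kle_refl (a : K) : kle a a := WCKA.add_idem a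

lemma kle_trans {a b c : K} (h1 : kle a b) (h2 : kle b c) : kle a c := by
  unfold kle at *
  rw [← h2, ← WCKA.add_assoc, h1]

lemma kle_antisymm {a b : K} (h1 : kle a b) (h2 : kle b a) : a = b :=
  calc a = add b a := h2.symm
    _ = add a b := WCKA.add_comm _ _
    _ = b := h1

lemma zero_kle (a : K) : kle zero a := by
  unfold kle; rw [WCKA.add_comm]; exact WCKA.add_zero a

lemma kle_add_left (a b : K) : kle a (add a b) := by
  unfold kle; rw [← WCKA.add_assoc, WCKA.add_idem]

lemma kle_add_right (a b : K) : kle b (add a b) := by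
  unfold kle; rw [WCKA.add_comm a b, ← WCKA.add_assoc, WCKA.add_idem]

lemma add_kle {a b c : K} (h1 : kle a c) (h2 : kle b c) : kle (add a b) c := by
  unfold kle at *
  rw [WCKA.add_assoc, h2, h1]

lemma seq_mono_right {a b : K} (z : K) (h : kle a b) : kle (seq z a) (seq z b) := by
  have h1 : kle (add (seq z a) (seq z b)) (seq z (add a b)) := WCKA.seq_subdistrib z a b
  rw [h] at h1
  exact kle_trans (kle_add_left (seq z a) (seq z b)) h1

lemma powS_unfold (z : K) (n : ℕ) :
    wpow (add one z) (n + 1)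
      = add (wpow (add one z) n) (seq z (wpow (add one z) n)) := by
  show seq (add one z) (wpow (add one z) n) = _
  rw [WCKA.add_seq, WCKA.one_seq]

omit [WCKA K] in
lemma wpow_zero (z : K) : wpow z 0 = one := rfl

lemma powS_mono (z : K) {j j' : ℕ} (h : j ≤ j') :
    kle (wpow (add one z) j) (wpow (add one z) j') := by
  induction h with
  | refl => exact kle_refl _
  | step _ ih =>
    rw [powS_unfold]
    exact kle_trans ih (kle_add_left _ _)

lemma add_absorb3 {P Q R S : K} (hQ : kle Q S) (hR : kle R S) :
    add (add P Q) (add R S) = add P S := by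
  rw [WCKA.add_assoc]
  congr 1
  rw [hR]
  exact hQ

lemma hdist' (hdist : ∀ u v w : K, par u (add v w) = add (par u v) (par u w))
    (v w u : K) : par (add v w) u = add (par v u) (par w u) := by
  rw [WCKA.par_comm, hdist, WCKA.par_comm u v, WCKA.par_comm u w]

end WCKAHelpers

open WCKAHelpers

/-- Serialised equals concurrent specification: under the synchronisation
assumptions, and assuming the continuity facts that `(x∥y)*` is the least upper
bound of `{(1 + x∥y)^n : n ∈ ℕ}` and `x*∥y*` is the least upper bound of
`{(1+x)^m ∥ (1+y)^n : m, n ∈ ℕ}` (with respect to the natural order),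
we have `x*∥y* = (x∥y)*`. -/
theorem wcka_star_par_star_eq {K : Type*} [WCKAOps K] [WCKA K]
    (hdist : ∀ u v w : K, par u (add v w) = add (par u v) (par u w))
    (x y : K)
    (hsync : ∀ a b : K, par (seq x a) (seq y b) = seq (par x y) (par a b))
    (hx : ∀ a : K, par (seq x a) one = zero)
    (hy : ∀ b : K, par one (seq y b) = zero)
    (hub₁ : ∀ n : ℕ, kle (wpow (add one (par x y)) n) (star (par x y)))
    (hlub₁ : ∀ u : K, (∀ n : ℕ, kle (wpow (add one (par x y)) n) u) →
      kle (star (par x y)) u)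
    (hub₂ : ∀ m n : ℕ,
      kle (par (wpow (add one x) m) (wpow (add one y) n)) (par (star x) (star y)))
    (hlub₂ : ∀ u : K, (∀ m n : ℕ,
        kle (par (wpow (add one x) m) (wpow (add one y) n)) u) →
      kle (par (star x) (star y)) u) :
    par (star x) (star y) = star (par x y) := by
  have B1 : ∀ m : ℕ, par (wpow (add one x) m) one = one := by
    intro m
    induction m with
    | zero => exact WCKA.par_one_one
    | succ k ih => rw [powS_unfold, hdist' hdist, ih, hx, WCKA.add_zero]
  have B2 : ∀ n : ℕ, par one (wpow (add one y) n) = one := by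
    intro n
    induction n with
    | zero => exact WCKA.par_one_one
    | succ k ih => rw [powS_unfold, hdist, ih, hy, WCKA.add_zero]
  have main : ∀ m : ℕ,
      (∀ n : ℕ, par (wpow (add one x) m) (wpow (add one y) n)
          = wpow (add one (par x y)) (min m n))
      ∧ (∀ n : ℕ, kle (par (wpow (add one x) m) (seq y (wpow (add one y) n)))
          (seq (par x y) (wpow (add one (par x y)) (min m n))))
      ∧ (∀ n : ℕ, kle (par (seq x (wpow (add one x) m)) (wpow (add one y) n))
          (seq (par x y) (wpow (add one (par x y)) (min m n)))) := by
    intro m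
    induction m with
    | zero =>
      refine ⟨?_, ?_, ?_⟩
      · intro n
        simp only [Nat.zero_min]
        exact B2 n
      · intro n
        have h0 : par (wpow (add one x) 0) (seq y (wpow (add one y) n)) = zero := hy _
        rw [h0]
        exact zero_kle _
      · intro n
        induction n with
        | zero =>
          have h0 : par (seq x (wpow (add one x) 0)) (wpow (add one y) 0) = zero := hx _
          rw [h0]
          exact zero_kle _
        | succ k ihn =>
          rw [powS_unfold y k, hdist, hsync, wpow_zero (add one x), B2 k]
          simp only [Nat.zero_min] at ihn ⊢
          exact add_kle ihn (kle_refl _)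
    | succ m ih =>
      obtain ⟨hE, hC, hC'⟩ := ih
      have hE1 : ∀ n : ℕ, par (wpow (add one x) (m + 1)) (wpow (add one y) n)
          = wpow (add one (par x y)) (min (m + 1) n) := by
        intro n
        cases n with
        | zero =>
          simp only [Nat.min_zero]
          exact B1 (m + 1)
        | succ n =>
          rw [powS_unfold x m, powS_unfold y n, hdist, hdist' hdist, hdist' hdist,
              hsync, hE n, Nat.succ_min_succ, powS_unfold (par x y) (min m n)]
          exact add_absorb3 (hC' n) (hC n)
      have hC1 : ∀ n : ℕ, kle (par (wpow (add one x) (m + 1)) (seq y (wpow (add one y) n)))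
          (seq (par x y) (wpow (add one (par x y)) (min (m + 1) n))) := by
        intro n
        have hm : min m n ≤ min (m + 1) n := min_le_min (Nat.le_succ m) le_rfl
        rw [powS_unfold x m, hdist' hdist, hsync, hE n]
        exact add_kle
          (kle_trans (hC n) (seq_mono_right _ (powS_mono _ hm)))
          (seq_mono_right _ (powS_mono _ hm))
      have hC'1 : ∀ n : ℕ, kle (par (seq x (wpow (add one x) (m + 1))) (wpow (add one y) n))
          (seq (par x y) (wpow (add one (par x y)) (min (m + 1) n))) := by
        intro n
        induction n with
        | zero =>
          have h0 : par (seq x (wpow (add one x) (m + 1))) (wpow (add one y) 0) = zero := hx _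
          rw [h0]
          exact zero_kle _
        | succ k ihn =>
          have hm : min (m + 1) k ≤ min (m + 1) (k + 1) := min_le_min le_rfl (Nat.le_succ k)
          rw [powS_unfold y k, hdist, hsync, hE1 k]
          exact add_kle
            (kle_trans ihn (seq_mono_right _ (powS_mono _ hm)))
            (seq_mono_right _ (powS_mono _ hm))
      exact ⟨hE1, hC1, hC'1⟩
  have hE : ∀ m n : ℕ, par (wpow (add one x) m) (wpow (add one y) n)
      = wpow (add one (par x y)) (min m n) := fun m => (main m).1
  apply kle_antisymm
  · apply hlub₂
    intro m n
    rw [hE m n]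
    exact hub₁ _
  · apply hlub₁
    intro n
    have h := hub₂ n n
    rw [hE n n, Nat.min_self] at h
    exact h
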